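/- arXiv:2602.09788 — 3 statements merged into one kernel-verified Lean document; each statement's English description precedes it below -/
import Mathlib

section
/- Let m be a positive even number and let i ≠ j be elements of Fin m. Let U be any one of the four matrices U_S(P(i,j)), U_P(P(i,j)), U_S(Q(i,j)), U_P(Q(i,j)), acting on qubits indexed by the label set (Fin m → ZMod 2). Then conjugation by U maps the stabilizer group S of the quantum Reed–Muller code QRM(m) onto itself: for every g ∈ S, both U * g * U⁻¹ ∈ S and U⁻¹ * g * U ∈ S. -/
/-- The vector `v_A` : its value at a label `x : Fin m → ZMod 2` is `∏_{a ∈ A} x a`. -/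
def vA (m : ℕ) (A : Finset (Fin m)) : (Fin m → ZMod 2) → ZMod 2 :=
  fun x => ∏ a ∈ A, x a

/-- Qubit labels. -/
abbrev Lab (m : ℕ) := Fin m → ZMod 2

/-- Basis states: functions from qubit labels to `ZMod 2`. -/
abbrev St (m : ℕ) := Lab m → ZMod 2

/-- The Pauli-X type operator `X(w)`: the matrix with `(y, x)` entry `1` if
`y = x + w` and `0` otherwise. -/
noncomputable def Xmat (m : ℕ) (w : St m) : Matrix (St m) (St m) ℂ :=
  Matrix.of fun y x => if y = x + w then 1 else 0

/-- `N(w, x)`: the number of qubits `q` with `w q = 1` and `x q = 1`. -/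
def Nwt (m : ℕ) (w x : St m) : ℕ :=
  (Finset.univ.filter (fun q => w q = 1 ∧ x q = 1)).card

/-- The Pauli-Z type operator `Z(w)`: the diagonal matrix with `(x, x)` entry
`(-1) ^ N(w, x)`. -/
noncomputable def Zmat (m : ℕ) (w : St m) : Matrix (St m) (St m) ℂ :=
  Matrix.diagonal fun x => (-1) ^ Nwt m w x

/-- The stabilizer group of the quantum Reed–Muller code `QRM(m)`: the subgroup
of invertible complex matrices generated by the matrices `X(v_A)` and `Z(v_A)`
for `A ⊆ Fin m` with `|A| ≤ m/2 - 1`. -/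
noncomputable def stab (m : ℕ) : Subgroup (Matrix (St m) (St m) ℂ)ˣ :=
  Subgroup.closure {u : (Matrix (St m) (St m) ℂ)ˣ |
    ∃ A : Finset (Fin m), A.card ≤ m / 2 - 1 ∧
      ((u : Matrix (St m) (St m) ℂ) = Xmat m (vA m A) ∨
       (u : Matrix (St m) (St m) ℂ) = Zmat m (vA m A))}

/-- The swap-type fold-transversal gate `U_S(π)` of an involutive permutation
`π` of the qubits: the matrix with `(y, x)` entry `1` if `y = x ∘ π` and `0`
otherwise. -/
noncomputable def USg (m : ℕ) (f : Lab m → Lab m) : Matrix (St m) (St m) ℂ :=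
  Matrix.of fun y x => if y = x ∘ f then 1 else 0

/-- The phase-type fold-transversal gate `U_P(π)` of an involutive permutation
`π` of the qubits: the diagonal matrix with `(x, x)` entry `i ^ c(x)`, where
`c(x) = ∑_q x(q)·x(π(q))` computed in `ℕ`. -/
noncomputable def UPg (m : ℕ) (f : Lab m → Lab m) : Matrix (St m) (St m) ℂ :=
  Matrix.diagonal fun x => Complex.I ^ (∑ q, (x q).val * (x (f q)).val)

/-- `P(i,j)`: the involutive permutation of labels swapping coordinates `i`
and `j` of every label. -/
def Pmap (m : ℕ) (i j : Fin m) : Lab m → Lab m :=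
  fun x => x ∘ Equiv.swap i j

/-- `Q(i,j)`: the involutive permutation of labels replacing `x i` by
`x i + x j` and fixing all other coordinates. -/
def Qmap (m : ℕ) (i j : Fin m) : Lab m → Lab m :=
  fun x => Function.update x i (x i + x j)

/-!
Every gate `U` satisfies `U ^ 4 = 1`, so `U⁻¹` is a power of `U` and it suffices to show that
conjugation by `U` maps the generators `X(v_A)`, `Z(v_A)` of `S` into `S`. The `v_A` with
`|A| ≤ m/2 - 1` span the Reed–Muller code `RM(m/2 - 1, m)`, which `P(i,j)` and `Q(i,j)` preserve.
The swap gate `U_S(π)` conjugates `X(w)`, `Z(w)` to `X(w ∘ π)`, `Z(w ∘ π)`. The phase gate `U_P(π)`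
commutes with `Z(w)` and conjugates `X(w)` to `X(w) Z(w ∘ π)` times the scalar `i ^ N(w, w ∘ π)`;
for `w = v_A` the set counted by `N(w, w ∘ π)` is cut out by conditions on at most `m - 2`
coordinates, so its size is divisible by 4 and the scalar is `1`.
-/

open Finset

lemma pow_eq_pow_of_natCast_eq {M : Type*} [Monoid M] {x : M} {n : ℕ} (hx : x ^ n = 1)
    {a b : ℕ} (h : (a : ZMod n) = b) : x ^ a = x ^ b := by
  rw [pow_eq_pow_mod a hx, pow_eq_pow_mod b hx, (ZMod.natCast_eq_natCast_iff' a b n).mp h]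

section Counting

variable {m : ℕ}

lemma card_filter_forall_mem_eq (D : Finset (Fin m)) (σ : Lab m) :
    #{q : Lab m | ∀ a ∈ D, q a = σ a} = 2 ^ (m - #D) := by
  have hpi : ({q : Lab m | ∀ a ∈ D, q a = σ a} : Finset (Lab m)) =
      Fintype.piFinset fun a => if a ∈ D then {σ a} else univ := by
    ext q
    simp only [mem_filter, mem_univ, true_and, Fintype.mem_piFinset]
    refine forall_congr' fun a => ?_
    split_ifs with ha <;> simp [ha]
  rw [hpi, Fintype.card_piFinset]
  simp only [apply_ite card, card_singleton, card_univ, ZMod.card, prod_ite, prod_const_one,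
    prod_const, one_mul]
  rw [filter_not, filter_mem_eq_inter, univ_inter, ← compl_eq_univ_sdiff, card_compl,
    Fintype.card_fin]

lemma two_pow_dvd_card_filter_of_dependsOn {P : Lab m → Prop} [DecidablePred P]
    {D : Finset (Fin m)} (hP : DependsOn P D) : 2 ^ (m - #D) ∣ #{q | P q} := by
  rw [card_eq_sum_card_image D.restrict]
  refine dvd_sum fun r hr => ?_
  obtain ⟨q₀, hq₀, rfl⟩ := mem_image.mp hr
  have hfiber : ({q | P q ∧ D.restrict q = D.restrict q₀} : Finset (Lab m)) =
      ({q | ∀ a ∈ D, q a = q₀ a} : Finset (Lab m)) := by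
    ext q
    simp only [mem_filter, mem_univ, true_and, funext_iff, Finset.restrict, Subtype.forall]
    exact ⟨And.right, fun h => ⟨(hP h).mpr (mem_filter.mp hq₀).2, h⟩⟩
  rw [filter_filter, hfiber, card_filter_forall_mem_eq]

lemma two_pow_dvd_Nwt_of_dependsOn {w w' : St m} {D : Finset (Fin m)}
    (hw : DependsOn w D) (hw' : DependsOn w' D) : 2 ^ (m - #D) ∣ Nwt m w w' :=
  two_pow_dvd_card_filter_of_dependsOn fun q q' h => by rw [hw h, hw' h]

lemma four_dvd_Nwt_of_dependsOn {w w' : St m} {D : Finset (Fin m)}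
    (hw : DependsOn w D) (hw' : DependsOn w' D) (hD : #D + 2 ≤ m) : 4 ∣ Nwt m w w' :=
  (pow_dvd_pow 2 (by omega : 2 ≤ m - #D)).trans (two_pow_dvd_Nwt_of_dependsOn hw hw')

end Counting

section ReedMuller

variable {m : ℕ}

lemma vA_dependsOn (A : Finset (Fin m)) : DependsOn (vA m A) A :=
  fun _ _ h => prod_congr rfl h

lemma vA_insert (A : Finset (Fin m)) (j : Fin m) (q : Lab m) :
    vA m (insert j A) q = q j * vA m A q := by
  by_cases hj : j ∈ A
  · rw [insert_eq_of_mem hj, vA, ← mul_prod_erase A q hj, ← mul_assoc, ← sq, ZMod.pow_card]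
  · exact prod_insert hj

lemma vA_comp_Pmap (A : Finset (Fin m)) (i j : Fin m) :
    vA m A ∘ Pmap m i j = vA m (A.map (Equiv.swap i j).toEmbedding) := by
  funext q
  simp [vA, Pmap, prod_map]

lemma vA_comp_Qmap_of_notMem {A : Finset (Fin m)} {i : Fin m} (hi : i ∉ A) (j : Fin m) :
    vA m A ∘ Qmap m i j = vA m A :=
  funext fun _ => prod_congr rfl fun _ ha => Function.update_of_ne (ne_of_mem_of_not_mem ha hi) _ _

lemma vA_comp_Qmap_of_mem {A : Finset (Fin m)} {i : Fin m} (hi : i ∈ A) (j : Fin m) :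
    vA m A ∘ Qmap m i j = vA m A + vA m (insert j (A.erase i)) := by
  funext q
  have hQi : Qmap m i j q i = q i + q j := Function.update_self _ _ _
  have hrest : ∏ a ∈ A.erase i, Qmap m i j q a = ∏ a ∈ A.erase i, q a :=
    prod_congr rfl fun a ha => Function.update_of_ne (ne_of_mem_erase ha) _ _
  simp only [Function.comp_apply, Pi.add_apply, vA_insert]
  simp only [vA]
  rw [← mul_prod_erase A _ hi, ← mul_prod_erase A q hi, hrest, hQi, add_mul]

lemma vA_comp_Qmap_dependsOn (A : Finset (Fin m)) (i j : Fin m) :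
    DependsOn (vA m A ∘ Qmap m i j) ↑(insert j A) := by
  intro q q' h
  refine prod_congr rfl fun a ha => ?_
  simp only [Qmap, Function.update_apply]
  split_ifs with hai
  · subst hai
    rw [h a (mem_insert_of_mem ha), h j (mem_insert_self j A)]
  · exact h a (mem_insert_of_mem ha)

def reedMuller (m r : ℕ) : Submodule (ZMod 2) (St m) :=
  Submodule.span (ZMod 2) {w | ∃ A : Finset (Fin m), #A ≤ r ∧ vA m A = w}

lemma vA_mem_reedMuller {r : ℕ} {A : Finset (Fin m)} (hA : #A ≤ r) : vA m A ∈ reedMuller m r :=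
  Submodule.subset_span ⟨A, hA, rfl⟩

lemma reedMuller_induction {r : ℕ} {p : St m → Prop} (zero : p 0)
    (add : ∀ a b, p a → p b → p (a + b)) (vA_mem : ∀ A : Finset (Fin m), #A ≤ r → p (vA m A))
    {w : St m} (hw : w ∈ reedMuller m r) : p w := by
  induction hw using Submodule.span_induction with
  | mem w hw =>
    obtain ⟨A, hA, rfl⟩ := hw
    exact vA_mem A hA
  | zero => exact zero
  | add a b _ _ ha hb => exact add a b ha hb
  | smul c w _ hw =>
    obtain rfl | rfl : c = 0 ∨ c = 1 := by revert c; decide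
    · simpa using zero
    · simpa using hw

lemma comp_mem_reedMuller {r : ℕ} {f : Lab m → Lab m}
    (hf : ∀ A : Finset (Fin m), #A ≤ r → vA m A ∘ f ∈ reedMuller m r) {w : St m}
    (hw : w ∈ reedMuller m r) : w ∘ f ∈ reedMuller m r :=
  reedMuller_induction (p := fun w => w ∘ f ∈ reedMuller m r) (zero_mem _)
    (fun _ _ ha hb => add_mem ha hb) hf hw

lemma comp_Pmap_mem_reedMuller {r : ℕ} (i j : Fin m) {w : St m} (hw : w ∈ reedMuller m r) :
    w ∘ Pmap m i j ∈ reedMuller m r := by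
  refine comp_mem_reedMuller (fun A hA => ?_) hw
  rw [vA_comp_Pmap]
  exact vA_mem_reedMuller (by rwa [card_map])

lemma comp_Qmap_mem_reedMuller {r : ℕ} (i j : Fin m) {w : St m} (hw : w ∈ reedMuller m r) :
    w ∘ Qmap m i j ∈ reedMuller m r := by
  refine comp_mem_reedMuller (fun A hA => ?_) hw
  by_cases hi : i ∈ A
  · rw [vA_comp_Qmap_of_mem hi]
    refine add_mem (vA_mem_reedMuller hA) (vA_mem_reedMuller ?_)
    have := card_erase_add_one hi
    have := card_insert_le j (A.erase i)
    omega
  · rw [vA_comp_Qmap_of_notMem hi]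
    exact vA_mem_reedMuller hA

lemma four_dvd_Nwt_vA_comp_Pmap (hm : 2 ≤ m) {A : Finset (Fin m)} (hA : #A ≤ m / 2 - 1)
    (i j : Fin m) : 4 ∣ Nwt m (vA m A) (vA m A ∘ Pmap m i j) := by
  rw [vA_comp_Pmap]
  refine four_dvd_Nwt_of_dependsOn (D := A ∪ A.map (Equiv.swap i j).toEmbedding)
    ((vA_dependsOn _).mono (coe_subset.mpr subset_union_left))
    ((vA_dependsOn _).mono (coe_subset.mpr subset_union_right)) ?_
  have := card_union_le A (A.map (Equiv.swap i j).toEmbedding)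
  rw [card_map] at this
  omega

lemma four_dvd_Nwt_vA_comp_Qmap (hm : 2 ≤ m) {A : Finset (Fin m)} (hA : #A ≤ m / 2 - 1)
    (i j : Fin m) : 4 ∣ Nwt m (vA m A) (vA m A ∘ Qmap m i j) := by
  by_cases hi : i ∈ A
  · refine four_dvd_Nwt_of_dependsOn ((vA_dependsOn A).mono (coe_subset.mpr (subset_insert j A)))
      (vA_comp_Qmap_dependsOn A i j) ?_
    have := card_pos.mpr ⟨i, hi⟩
    have := card_insert_le j A
    omega
  · rw [vA_comp_Qmap_of_notMem hi]
    exact four_dvd_Nwt_of_dependsOn (vA_dependsOn A) (vA_dependsOn A) (by omega)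

end ReedMuller

section Pauli

variable {m : ℕ}

lemma natCast_Nwt {R : Type*} [CommSemiring R] (w x : St m) :
    (Nwt m w x : R) = ∑ q, ((w q).val : R) * ((x q).val : R) := by
  rw [Nwt, natCast_card_filter]
  refine sum_congr rfl fun q _ => ?_
  have h01 : ∀ c : ZMod 2, c = 0 ∨ c = 1 := by decide
  rcases h01 (w q) with h | h <;> rcases h01 (x q) with h' | h' <;> simp [h, h', ZMod.val_one]

lemma Xmat_zero : Xmat m 0 = 1 := by
  ext y x
  simp [Xmat, Matrix.one_apply]

lemma Xmat_add (a b : St m) : Xmat m (a + b) = Xmat m a * Xmat m b := by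
  ext y x
  simp [Xmat, Matrix.mul_apply, add_comm a b, ← add_assoc]

lemma Zmat_zero : Zmat m 0 = 1 := by
  simp [Zmat, Nwt]

lemma Zmat_add (a b : St m) : Zmat m (a + b) = Zmat m a * Zmat m b := by
  rw [Zmat, Zmat, Zmat, Matrix.diagonal_mul_diagonal]
  congr 1
  funext x
  rw [← pow_add]
  refine pow_eq_pow_of_natCast_eq (by norm_num : (-1 : ℂ) ^ 2 = 1) ?_
  simp [natCast_Nwt, add_mul, sum_add_distrib]

end Pauli

section Stabilizer

variable {m : ℕ}

noncomputable def stabMat (m : ℕ) : Submonoid (Matrix (St m) (St m) ℂ) :=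
  (stab m).toSubmonoid.map (Units.coeHom _)

lemma mem_stabMat_of_sq_eq_one {M : Matrix (St m) (St m) ℂ} (hM : M ^ 2 = 1) {A : Finset (Fin m)}
    (hA : #A ≤ m / 2 - 1) (hgen : M = Xmat m (vA m A) ∨ M = Zmat m (vA m A)) :
    M ∈ stabMat m :=
  ⟨Units.ofPowEqOne M 2 hM two_ne_zero,
    Subgroup.subset_closure ⟨A, hA, by rwa [Units.val_ofPowEqOne]⟩,
    Units.val_ofPowEqOne M 2 hM two_ne_zero⟩

lemma Xmat_mem_stabMat {w : St m} (hw : w ∈ reedMuller m (m / 2 - 1)) : Xmat m w ∈ stabMat m :=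
  reedMuller_induction (p := fun w => Xmat m w ∈ stabMat m) (by rw [Xmat_zero]; exact one_mem _)
    (fun a b ha hb => by rw [Xmat_add]; exact mul_mem ha hb)
    (fun _ hA => mem_stabMat_of_sq_eq_one
      (by rw [sq, ← Xmat_add, CharTwo.add_self_eq_zero, Xmat_zero]) hA (Or.inl rfl)) hw

lemma Zmat_mem_stabMat {w : St m} (hw : w ∈ reedMuller m (m / 2 - 1)) : Zmat m w ∈ stabMat m :=
  reedMuller_induction (p := fun w => Zmat m w ∈ stabMat m) (by rw [Zmat_zero]; exact one_mem _)
    (fun a b ha hb => by rw [Zmat_add]; exact mul_mem ha hb)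
    (fun _ hA => mem_stabMat_of_sq_eq_one
      (by rw [sq, ← Zmat_add, CharTwo.add_self_eq_zero, Zmat_zero]) hA (Or.inr rfl)) hw

lemma conj_mem_stab {u : (Matrix (St m) (St m) ℂ)ˣ}
    (hX : ∀ A : Finset (Fin m), #A ≤ m / 2 - 1 →
      ∃ N ∈ stabMat m, (u : Matrix (St m) (St m) ℂ) * Xmat m (vA m A) = N * u)
    (hZ : ∀ A : Finset (Fin m), #A ≤ m / 2 - 1 →
      ∃ N ∈ stabMat m, (u : Matrix (St m) (St m) ℂ) * Zmat m (vA m A) = N * u)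
    {g : (Matrix (St m) (St m) ℂ)ˣ} (hg : g ∈ stab m) : u * g * u⁻¹ ∈ stab m := by
  have hgen : ∀ s : (Matrix (St m) (St m) ℂ)ˣ,
      (∃ N ∈ stabMat m, (u * s : Matrix (St m) (St m) ℂ) = N * u) → u * s * u⁻¹ ∈ stab m := by
    rintro s ⟨_, ⟨h, hh, rfl⟩, hs⟩
    have hconj : u * s * u⁻¹ = h := by
      ext : 1
      rw [Units.val_mul, Units.val_mul, hs, mul_assoc, Units.mul_inv, mul_one]
      rfl
    rwa [hconj]
  refine (Subgroup.closure_le ((stab m).comap (MulAut.conj u).toMonoidHom)).mpr ?_ hg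
  rintro s ⟨A, hA, hs | hs⟩
  · exact hgen s (hs ▸ hX A hA)
  · exact hgen s (hs ▸ hZ A hA)

lemma inv_mul_mul_mem_of_isOfFinOrder {G : Type*} [Group G] {H : Subgroup G} {u : G}
    (hu : IsOfFinOrder u) (h : ∀ g ∈ H, u * g * u⁻¹ ∈ H) {g : G} (hg : g ∈ H) :
    u⁻¹ * g * u ∈ H := by
  have hpow : ∀ n : ℕ, ∀ g ∈ H, u ^ n * g * (u ^ n)⁻¹ ∈ H := by
    intro n
    induction n with
    | zero => simp
    | succ n ih =>
      intro g hg
      simpa [pow_succ', mul_assoc] using h _ (ih g hg)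
  obtain ⟨n, hn⟩ : u⁻¹ ∈ Submonoid.powers u :=
    hu.mem_powers_iff_mem_zpowers.mpr (inv_mem (Subgroup.mem_zpowers u))
  simpa [hn] using hpow n g hg

def ConjPreservesStab (m : ℕ) (U : Matrix (St m) (St m) ℂ) : Prop :=
  ∀ g ∈ stab m,
    (∃ h ∈ stab m, (h : Matrix (St m) (St m) ℂ) = U * (g : Matrix (St m) (St m) ℂ) * U⁻¹) ∧
    (∃ h ∈ stab m, (h : Matrix (St m) (St m) ℂ) = U⁻¹ * (g : Matrix (St m) (St m) ℂ) * U)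

theorem conjPreservesStab_of_pow_eq_one {U : Matrix (St m) (St m) ℂ} {n : ℕ} (hn : n ≠ 0)
    (hU : U ^ n = 1)
    (hX : ∀ A : Finset (Fin m), #A ≤ m / 2 - 1 → ∃ N ∈ stabMat m, U * Xmat m (vA m A) = N * U)
    (hZ : ∀ A : Finset (Fin m), #A ≤ m / 2 - 1 → ∃ N ∈ stabMat m, U * Zmat m (vA m A) = N * U) :
    ConjPreservesStab m U := by
  set u := Units.ofPowEqOne U n hU hn
  have hu : (u : Matrix (St m) (St m) ℂ) = U := Units.val_ofPowEqOne _ _ _ _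
  have hconj : ∀ g ∈ stab m, u * g * u⁻¹ ∈ stab m :=
    fun g => conj_mem_stab (hu ▸ hX) (hu ▸ hZ)
  have hfin : IsOfFinOrder u :=
    isOfFinOrder_iff_pow_eq_one.mpr ⟨n, Nat.pos_of_ne_zero hn, Units.pow_ofPowEqOne _ _⟩
  intro g hg
  refine ⟨⟨_, hconj g hg, ?_⟩, ⟨_, inv_mul_mul_mem_of_isOfFinOrder hfin hconj hg, ?_⟩⟩ <;>
    simp [hu, Matrix.coe_units_inv]

end Stabilizer

section Gates

open Function

variable {m : ℕ} {f : Lab m → Lab m}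

lemma USg_mul_self (hf : Involutive f) : USg m f * USg m f = 1 := by
  ext y x
  simp [USg, Matrix.mul_apply, Matrix.one_apply, Function.comp_assoc, hf.comp_self]

lemma USg_mul_Xmat (f : Lab m → Lab m) (w : St m) :
    USg m f * Xmat m w = Xmat m (w ∘ f) * USg m f := by
  ext y x
  simp [USg, Xmat, Matrix.mul_apply, Pi.add_comp]

lemma Nwt_comp (hf : Bijective f) (w x : St m) : Nwt m (w ∘ f) (x ∘ f) = Nwt m w x := by
  simp only [Nwt, card_filter]
  exact hf.sum_comp fun q => if w q = 1 ∧ x q = 1 then 1 else 0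

lemma USg_mul_Zmat (hf : Bijective f) (w : St m) :
    USg m f * Zmat m w = Zmat m (w ∘ f) * USg m f := by
  ext y x
  rw [Zmat, Zmat, Matrix.mul_diagonal, Matrix.diagonal_mul]
  simp only [USg, Matrix.of_apply]
  split_ifs with h
  · rw [h, Nwt_comp hf, one_mul, mul_one]
  · simp

def phaseExp (m : ℕ) (f : Lab m → Lab m) (x : St m) : ℕ :=
  ∑ q, (x q).val * (x (f q)).val

lemma UPg_eq_diagonal (f : Lab m → Lab m) :
    UPg m f = Matrix.diagonal fun x => Complex.I ^ phaseExp m f x :=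
  rfl

lemma UPg_pow_four (f : Lab m → Lab m) : UPg m f ^ 4 = 1 := by
  rw [UPg_eq_diagonal, Matrix.diagonal_pow, ← Matrix.diagonal_one]
  congr 1
  funext x
  rw [Pi.pow_apply, ← pow_mul, mul_comm, pow_mul, Complex.I_pow_four, one_pow]

lemma UPg_mul_Zmat (f : Lab m → Lab m) (w : St m) :
    UPg m f * Zmat m w = Zmat m w * UPg m f := by
  simp only [UPg, Zmat, Matrix.diagonal_mul_diagonal, mul_comm]

lemma natCast_phaseExp_add (hf : Involutive f) (x w : St m) :
    (phaseExp m f (x + w) : ZMod 4) =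
      phaseExp m f x + 2 * Nwt m (w ∘ f) x + Nwt m w (w ∘ f) := by
  have hval : ∀ a b : ZMod 2,
      (((a + b).val : ℕ) : ZMod 4) = a.val + b.val + 2 * a.val * b.val := by decide
  have hfour : (4 : ZMod 4) = 0 := rfl
  have hswap : ∀ F : Lab m → ZMod 4, ∑ q, (F (f q) - F q) = 0 := fun F => by
    rw [sum_sub_distrib, hf.bijective.sum_comp F, sub_self]
  set X : Lab m → ZMod 4 := fun q => ((x q).val : ZMod 4)
  set W : Lab m → ZMod 4 := fun q => ((w q).val : ZMod 4)
  set F₁ : Lab m → ZMod 4 := fun q => X q * W (f q)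
  set F₂ : Lab m → ZMod 4 := fun q => X q * W q * X (f q)
  set F₃ : Lab m → ZMod 4 := fun q => X q * W q * W (f q)
  have hpt : ∀ q, (((x q + w q).val : ℕ) : ZMod 4) * (((x (f q) + w (f q)).val : ℕ) : ZMod 4) =
      X q * X (f q) + 2 * (W (f q) * X q) + W q * W (f q) + (F₁ (f q) - F₁ q)
        + 2 * (F₂ (f q) - F₂ q) + 2 * (F₃ (f q) - F₃ q) := fun q => by
    -- the expansion mod 4, with the cross terms grouped into differences killed by `hswap`
    simp only [F₁, F₂, F₃, hf q, hval]
    linear_combination (X q * W q * X (f q) + X q * W q * W (f q)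
      + X q * W q * X (f q) * W (f q)) * hfour
  simp only [phaseExp, natCast_Nwt, Nat.cast_sum, Nat.cast_mul, Pi.add_apply, comp_apply, hpt,
    sum_add_distrib, ← mul_sum, hswap]
  ring

lemma UPg_mul_Xmat (hf : Involutive f) {w : St m} (hw : 4 ∣ Nwt m w (w ∘ f)) :
    UPg m f * Xmat m w = Xmat m w * Zmat m (w ∘ f) * UPg m f := by
  ext y x
  rw [UPg_eq_diagonal, Zmat, Matrix.diagonal_mul, Matrix.mul_diagonal, Matrix.mul_diagonal]
  simp only [Xmat, Matrix.of_apply]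
  split_ifs with h
  · have hphase : Complex.I ^ phaseExp m f (x + w) =
        Complex.I ^ (2 * Nwt m (w ∘ f) x + phaseExp m f x) := by
      refine pow_eq_pow_of_natCast_eq Complex.I_pow_four ?_
      rw [natCast_phaseExp_add hf, (ZMod.natCast_eq_zero_iff _ 4).mpr hw]
      push_cast
      ring
    rw [h, hphase, pow_add, pow_mul, Complex.I_sq]
    ring
  · simp

theorem conjPreservesStab_USg (hf : Involutive f)
    (hRM : ∀ w ∈ reedMuller m (m / 2 - 1), w ∘ f ∈ reedMuller m (m / 2 - 1)) :
    ConjPreservesStab m (USg m f) :=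
  conjPreservesStab_of_pow_eq_one two_ne_zero (by rw [sq, USg_mul_self hf])
    (fun _ hA => ⟨_, Xmat_mem_stabMat (hRM _ (vA_mem_reedMuller hA)), USg_mul_Xmat f _⟩)
    (fun _ hA => ⟨_, Zmat_mem_stabMat (hRM _ (vA_mem_reedMuller hA)), USg_mul_Zmat hf.bijective _⟩)

theorem conjPreservesStab_UPg (hf : Involutive f)
    (hRM : ∀ w ∈ reedMuller m (m / 2 - 1), w ∘ f ∈ reedMuller m (m / 2 - 1))
    (hK : ∀ A : Finset (Fin m), #A ≤ m / 2 - 1 → 4 ∣ Nwt m (vA m A) (vA m A ∘ f)) :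
    ConjPreservesStab m (UPg m f) :=
  conjPreservesStab_of_pow_eq_one four_ne_zero (UPg_pow_four f)
    (fun _ hA => ⟨_, mul_mem (Xmat_mem_stabMat (vA_mem_reedMuller hA))
      (Zmat_mem_stabMat (hRM _ (vA_mem_reedMuller hA))), UPg_mul_Xmat hf (hK _ hA)⟩)
    (fun _ hA => ⟨_, Zmat_mem_stabMat (vA_mem_reedMuller hA), UPg_mul_Zmat f _⟩)

lemma Pmap_involutive (i j : Fin m) : Involutive (Pmap m i j) := fun x =>
  funext fun a => by simp [Pmap]

lemma Qmap_involutive {i j : Fin m} (hij : i ≠ j) : Involutive (Qmap m i j) := fun x => by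
  ext a
  simp only [Qmap, Function.update_apply, if_neg hij.symm]
  split_ifs with ha
  · subst ha
    rw [add_assoc, CharTwo.add_self_eq_zero, add_zero]
  · rfl

end Gates

theorem stmt9_general (m : ℕ) (i j : Fin m) (hij : i ≠ j)
    (U : Matrix (St m) (St m) ℂ)
    (hU : U = USg m (Pmap m i j) ∨ U = UPg m (Pmap m i j) ∨
          U = USg m (Qmap m i j) ∨ U = UPg m (Qmap m i j)) :
    ∀ g ∈ stab m,
      (∃ h ∈ stab m, (h : Matrix (St m) (St m) ℂ) = U * (g : Matrix (St m) (St m) ℂ) * U⁻¹) ∧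
      (∃ h ∈ stab m, (h : Matrix (St m) (St m) ℂ) = U⁻¹ * (g : Matrix (St m) (St m) ℂ) * U) := by
  have hm : 2 ≤ m := by
    have := Fin.val_ne_of_ne hij
    omega
  rcases hU with rfl | rfl | rfl | rfl
  · exact conjPreservesStab_USg (Pmap_involutive i j) (fun _ => comp_Pmap_mem_reedMuller i j)
  · exact conjPreservesStab_UPg (Pmap_involutive i j) (fun _ => comp_Pmap_mem_reedMuller i j)
      fun _ hA => four_dvd_Nwt_vA_comp_Pmap hm hA i j
  · exact conjPreservesStab_USg (Qmap_involutive hij) (fun _ => comp_Qmap_mem_reedMuller i j)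
  · exact conjPreservesStab_UPg (Qmap_involutive hij) (fun _ => comp_Qmap_mem_reedMuller i j)
      fun _ hA => four_dvd_Nwt_vA_comp_Qmap hm hA i j

/-- For distinct `i, j`, conjugation by any of `U_S(P(i,j))`, `U_P(P(i,j))`,
`U_S(Q(i,j))`, `U_P(Q(i,j))` maps the stabilizer group of `QRM(m)` onto
itself. -/
theorem stmt9 (m : ℕ) (hm : Even m) (h0 : 0 < m) (i j : Fin m) (hij : i ≠ j)
    (U : Matrix (St m) (St m) ℂ)
    (hU : U = USg m (Pmap m i j) ∨ U = UPg m (Pmap m i j) ∨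
          U = USg m (Qmap m i j) ∨ U = UPg m (Qmap m i j)) :
    ∀ g ∈ stab m,
      (∃ h ∈ stab m, (h : Matrix (St m) (St m) ℂ) = U * (g : Matrix (St m) (St m) ℂ) * U⁻¹) ∧
      (∃ h ∈ stab m, (h : Matrix (St m) (St m) ℂ) = U⁻¹ * (g : Matrix (St m) (St m) ℂ) * U) :=
  stmt9_general m i j hij U hU
end

section
/- Let m be a positive even number and let K be a set of m/2 ordered pairs of elements of Fin m whose m components are all pairwise distinct (so F₁(K) and F₂(K) partition Fin m). Let B = F₁(K) and let V = ∏_{L ⊆ K} U_P(Q(L)), the product over all subsets L of K (the factors are commuting diagonal matrices). Then: (i) V commutes with Z(w) for every w; (ii) there exists a codeword u ∈ RM(m/2 − 1, m) such that V * X(v_B) * V⁻¹ = ((−1)^{m/2}·i) • (X(v_B) * Z(v_{Bᶜ}) * Z(u)); and (iii) for every D ⊆ Fin m with |D| = m/2 and D ≠ B there exists a codeword u_D ∈ RM(m/2 − 1, m) such that V * X(v_D) * V⁻¹ = X(v_D) * Z(u_D). (Thus ∏_{L⊆K} U_P(Q(L)) implements the addressable logical phase gate S̄ on the single logical qubit F₁(K)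 of QRM(m) when m/2 is even, and S̄† when m/2 is odd.) -/
/-- The classical Reed–Muller code `RM(r, m)`: the `ZMod 2`-span of the
vectors `v_A` for `A ⊆ Fin m` with `|A| ≤ r`. -/
def RMcode (m r : ℕ) : Submodule (ZMod 2) (St m) :=
  Submodule.span (ZMod 2) {w | ∃ A : Finset (Fin m), A.card ≤ r ∧ w = vA m A}

/-- All first and second components of the pairs in `K` are pairwise
distinct. -/
def distinctPairs (m : ℕ) (K : Finset (Fin m × Fin m)) : Prop :=
  (∀ p ∈ K, p.1 ≠ p.2) ∧
  (∀ p ∈ K, ∀ q ∈ K, p ≠ q →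
    p.1 ≠ q.1 ∧ p.1 ≠ q.2 ∧ p.2 ≠ q.1 ∧ p.2 ≠ q.2)

/-- The permutation `Q(K)` of the labels: it sends `x` to the label `y` with
`y i = x i + x j` for each `(i,j) ∈ K` and `y l = x l` for all other `l`. -/
def QKmap (m : ℕ) (K : Finset (Fin m × Fin m)) : Lab m → Lab m :=
  fun x l => x l + ∑ p ∈ K.filter (fun p => p.1 = l), x p.2

/-- The set of first components of the pairs of `K`. -/
def F1 (m : ℕ) (K : Finset (Fin m × Fin m)) : Finset (Fin m) := K.image Prod.fst

/-- The set of second components of the pairs of `K`. -/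
def F2 (m : ℕ) (K : Finset (Fin m × Fin m)) : Finset (Fin m) := K.image Prod.snd

/-- The product `V = ∏_{L ⊆ K} U_P(Q(L))` over all subsets `L` of `K`
(the factors are commuting diagonal matrices, so the order is irrelevant). -/
noncomputable def Vprod (m : ℕ) (K : Finset (Fin m × Fin m)) :
    Matrix (St m) (St m) ℂ :=
  (K.powerset.toList.map fun L => UPg m (QKmap m L)).prod

-- ============================ auxiliary development ============================
namespace RM15
open Finset Matrix

lemma zmod2_cases : ∀ a : ZMod 2, a = 0 ∨ a = 1 := by decide

lemma zmod2_ne_one {a : ZMod 2} (h : ¬ a = 1) : a = 0 := (zmod2_cases a).resolve_right h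

lemma zmod2_mul_self (a : ZMod 2) : a * a = a := by revert a; decide

lemma zmod2_val_mul_self : ∀ a : ZMod 2, a.val * a.val = a.val := by decide

lemma zmod2_add_one_ne : ∀ a : ZMod 2, ¬ a + 1 = a := by decide

lemma zmod2_ne_iff : ∀ a b : ZMod 2, a ≠ b → a = b + 1 := by decide

lemma val_add4 : ∀ a b : ZMod 2,
    (((a + b).val : ZMod 4)) = (a.val : ZMod 4) + b.val + 2 * (a.val * b.val) := by decide

lemma zmod2_val_eq_ite : ∀ a : ZMod 2, a.val = if a = 1 then 1 else 0 := by decide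

variable {m : ℕ}

/-- membership pattern sets -/
def fixSet (E : Finset (Fin m)) (c : Fin m → ZMod 2) : Finset (Lab m) :=
  univ.filter (fun q => ∀ a ∈ E, q a = c a)

lemma mem_fixSet {E : Finset (Fin m)} {c : Fin m → ZMod 2} {q : Lab m} :
    q ∈ fixSet E c ↔ ∀ a ∈ E, q a = c a := by simp [fixSet]

lemma card_fixSet (E : Finset (Fin m)) (c : Fin m → ZMod 2) :
    (fixSet E c).card = 2 ^ (m - E.card) := by
  have h1 : (fixSet E c).card = Fintype.card {q : Lab m // ∀ a ∈ E, q a = c a} := by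
    rw [Fintype.card_subtype]; rfl
  have e : {q : Lab m // ∀ a ∈ E, q a = c a} ≃ ({a : Fin m // a ∉ E} → ZMod 2) :=
    { toFun := fun q a => q.1 a.1
      invFun := fun f => ⟨fun i => if h : i ∈ E then c i else f ⟨i, h⟩,
        fun a ha => by simp [ha]⟩
      left_inv := fun q => Subtype.ext (funext fun i => by
        by_cases h : i ∈ E
        · simp [h, q.2 i h]
        · simp [h])
      right_inv := fun f => funext fun a => by simp [a.2] }
  rw [h1, Fintype.card_congr e, Fintype.card_fun]
  congr 1
  have : Fintype.card {a : Fin m // a ∉ E} = Fintype.card (Fin m) - Fintype.card {a : Fin m // a ∈ E} :=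
    Fintype.card_subtype_compl _
  rw [this, Fintype.card_fin]
  congr 1
  exact Fintype.card_coe E

lemma vA_eq_one_iff (D : Finset (Fin m)) (q : Lab m) :
    vA m D q = 1 ↔ ∀ a ∈ D, q a = 1 := by
  constructor
  · intro h a ha
    by_contra hne
    have h0 : q a = 0 := zmod2_ne_one hne
    have : vA m D q = 0 := Finset.prod_eq_zero ha h0
    rw [this] at h; exact absurd h (by decide)
  · intro h; exact Finset.prod_eq_one h

lemma vA_val_eq_ite (D : Finset (Fin m)) (q : Lab m) :
    (vA m D q).val = if ∀ a ∈ D, q a = 1 then 1 else 0 := by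
  rw [zmod2_val_eq_ite (vA m D q)]
  by_cases h : ∀ a ∈ D, q a = 1
  · rw [if_pos h, if_pos ((vA_eq_one_iff D q).mpr h)]
  · rw [if_neg h, if_neg (fun h1 => h ((vA_eq_one_iff D q).mp h1))]

lemma sum_vA_fixSet (E : Finset (Fin m)) (c : Fin m → ZMod 2) (D : Finset (Fin m))
    (hc : ∀ a ∈ E, a ∈ D → c a = 1) :
    ∑ q ∈ fixSet E c, (vA m D q).val = 2 ^ (m - (E ∪ D).card) := by
  have h1 : ∑ q ∈ fixSet E c, (vA m D q).val
      = ((fixSet E c).filter (fun q => ∀ a ∈ D, q a = 1)).card := by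
    rw [Finset.card_filter]
    exact Finset.sum_congr rfl fun q _ => vA_val_eq_ite D q
  have h2 : (fixSet E c).filter (fun q => ∀ a ∈ D, q a = 1)
      = fixSet (E ∪ D) (fun l => if l ∈ E then c l else 1) := by
    ext q
    simp only [mem_filter, mem_fixSet, Finset.mem_union]
    constructor
    · rintro ⟨hE, hD⟩ a ha
      by_cases haE : a ∈ E
      · rw [if_pos haE]; exact hE a haE
      · rw [if_neg haE]; exact hD a (ha.resolve_left haE)
    · intro h
      constructor
      · intro a ha; have := h a (Or.inl ha); rwa [if_pos ha] at this
      · intro a ha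
        have := h a (Or.inr ha)
        by_cases haE : a ∈ E
        · rw [if_pos haE] at this; rw [this]; exact hc a haE ha
        · rwa [if_neg haE] at this
  rw [h1, h2, card_fixSet]

lemma sum_vA_fixSet_zero (E : Finset (Fin m)) (c : Fin m → ZMod 2) (D : Finset (Fin m))
    {a₀ : Fin m} (haE : a₀ ∈ E) (haD : a₀ ∈ D) (hc : c a₀ = 0) :
    ∑ q ∈ fixSet E c, (vA m D q).val = 0 := by
  apply Finset.sum_eq_zero
  intro q hq
  rw [vA_val_eq_ite, if_neg]
  intro h
  have h1 := h a₀ haD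
  have h2 := mem_fixSet.mp hq a₀ haE
  rw [hc] at h2; rw [h2] at h1; exact absurd h1 (by decide)


section WithK
variable (K : Finset (Fin m × Fin m))

lemma fst_inj (hK : distinctPairs m K) :
    ∀ p ∈ K, ∀ p' ∈ K, p.1 = p'.1 → p = p' := by
  intro p hp p' hp' h
  by_contra hne
  exact (hK.2 p hp p' hp' hne).1 h

lemma snd_inj (hK : distinctPairs m K) :
    ∀ p ∈ K, ∀ p' ∈ K, p.2 = p'.2 → p = p' := by
  intro p hp p' hp' h
  by_contra hne
  exact (hK.2 p hp p' hp' hne).2.2.2 h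

lemma cross_ne (hK : distinctPairs m K) :
    ∀ p ∈ K, ∀ p' ∈ K, p.1 ≠ p'.2 := by
  intro p hp p' hp'
  by_cases hpe : p = p'
  · subst hpe; exact hK.1 p hp
  · exact (hK.2 p hp p' hp' hpe).2.1

variable {K}

lemma Q_apply (L : Finset (Fin m × Fin m)) (q : Lab m) (l : Fin m) :
    QKmap m L q l = q l + ∑ p ∈ L.filter (fun p => p.1 = l), q p.2 := rfl

lemma Q_empty (q : Lab m) : QKmap m (∅ : Finset (Fin m × Fin m)) q = q := by
  funext l; simp [QKmap]

lemma Q_snd (hK : distinctPairs m K) {L : Finset (Fin m × Fin m)} (hL : L ⊆ K)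
    {p : Fin m × Fin m} (hp : p ∈ K) (q : Lab m) : QKmap m L q p.2 = q p.2 := by
  have h : L.filter (fun p' => p'.1 = p.2) = ∅ := by
    apply Finset.filter_eq_empty_iff.mpr
    intro p' hp'
    exact cross_ne K hK p' (hL hp') p hp
  rw [Q_apply, h, Finset.sum_empty, add_zero]

lemma Q_filter (L : Finset (Fin m × Fin m)) (q : Lab m) :
    QKmap m L q = QKmap m (L.filter fun p => q p.2 = 1) q := by
  funext l
  rw [Q_apply, Q_apply]
  congr 1
  refine (Finset.sum_subset ?_ ?_).symm
  · intro p hp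
    simp only [mem_filter] at hp ⊢
    exact ⟨hp.1.1, hp.2⟩
  · intro p hp hnp
    simp only [mem_filter] at hp hnp
    have : ¬ q p.2 = 1 := fun h => hnp ⟨⟨hp.1, h⟩, hp.2⟩
    exact zmod2_ne_one this

lemma Q_fst (hK : distinctPairs m K) {M : Finset (Fin m × Fin m)} (hM : M ⊆ K) (q : Lab m)
    (hq : ∀ p ∈ M, q p.2 = 1) {p : Fin m × Fin m} (hp : p ∈ M) :
    QKmap m M q p.1 = q p.1 + 1 := by
  have h : M.filter (fun p' => p'.1 = p.1) = {p} := by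
    ext p'
    simp only [mem_filter, mem_singleton]
    constructor
    · rintro ⟨hp', he⟩
      exact fst_inj K hK p' (hM hp') p (hM hp) he
    · rintro rfl; exact ⟨hp, rfl⟩
  rw [Q_apply, h, Finset.sum_singleton, hq p hp]

lemma Q_notmem_fst (q : Lab m) {M : Finset (Fin m × Fin m)} {l : Fin m}
    (h : ∀ p ∈ M, p.1 ≠ l) : QKmap m M q l = q l := by
  have hf : M.filter (fun p => p.1 = l) = ∅ := Finset.filter_eq_empty_iff.mpr h
  rw [Q_apply, hf, Finset.sum_empty, add_zero]

lemma Q_invol (hK : distinctPairs m K) {M : Finset (Fin m × Fin m)} (hM : M ⊆ K) (q : Lab m) :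
    QKmap m M (QKmap m M q) = q := by
  funext l
  rw [Q_apply, Q_apply]
  have hsum : ∑ p ∈ M.filter (fun p => p.1 = l), (QKmap m M q) p.2
      = ∑ p ∈ M.filter (fun p => p.1 = l), q p.2 := by
    apply Finset.sum_congr rfl
    intro p hp
    exact Q_snd hK hM (hM (Finset.mem_filter.mp hp).1) q
  rw [hsum, add_assoc, CharTwo.add_self_eq_zero, add_zero]

lemma Q_ne (hK : distinctPairs m K) {M : Finset (Fin m × Fin m)} (hM : M ⊆ K) (hne : M ≠ ∅)
    (q : Lab m) (hq : ∀ p ∈ M, q p.2 = 1) : QKmap m M q ≠ q := by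
  obtain ⟨p, hp⟩ := Finset.nonempty_of_ne_empty hne
  intro h
  have h1 := congrFun h p.1
  rw [Q_fst hK hM q hq hp] at h1
  exact zmod2_add_one_ne (q p.1) h1

/-- grouping a sum over the powerset of `K` by intersection with `J ⊆ K` -/
lemma sum_powerset_inter {α : Type*} [DecidableEq α] (K J : Finset α) (hJ : J ⊆ K)
    (g : Finset α → ℕ) :
    ∑ L ∈ K.powerset, g (L ∩ J) = 2 ^ (K \ J).card * ∑ M ∈ J.powerset, g M := by
  have h : ∑ L ∈ K.powerset, g (L ∩ J)
      = ∑ p ∈ J.powerset ×ˢ (K \ J).powerset, g p.1 := by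
    apply Finset.sum_nbij' (i := fun L => (L ∩ J, L \ J)) (j := fun p => p.1 ∪ p.2)
    · intro L hL
      rw [Finset.mem_product]
      constructor
      · exact Finset.mem_powerset.mpr Finset.inter_subset_right
      · exact Finset.mem_powerset.mpr
          (Finset.sdiff_subset_sdiff (Finset.mem_powerset.mp hL) (le_refl J))
    · intro p hp
      rw [Finset.mem_product] at hp
      rw [Finset.mem_powerset]
      apply Finset.union_subset
      · exact (Finset.mem_powerset.mp hp.1).trans hJ
      · exact (Finset.mem_powerset.mp hp.2).trans (Finset.sdiff_subset)
    · intro L hL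
      ext a
      simp only [Finset.mem_union, Finset.mem_inter, Finset.mem_sdiff]
      tauto
    · intro p hp
      rw [Finset.mem_product] at hp
      have h1 := Finset.mem_powerset.mp hp.1
      have h2 := Finset.mem_powerset.mp hp.2
      have e1 : (p.1 ∪ p.2) ∩ J = p.1 := by
        ext a
        simp only [Finset.mem_inter, Finset.mem_union]
        constructor
        · rintro ⟨h3 | h3, h4⟩
          · exact h3
          · exact absurd h4 (Finset.mem_sdiff.mp (h2 h3)).2
        · intro h3; exact ⟨Or.inl h3, h1 h3⟩
      have e2 : (p.1 ∪ p.2) \ J = p.2 := by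
        ext a
        simp only [Finset.mem_sdiff, Finset.mem_union]
        constructor
        · rintro ⟨h3 | h3, h4⟩
          · exact absurd (h1 h3) h4
          · exact h3
        · intro h3
          exact ⟨Or.inr h3, (Finset.mem_sdiff.mp (h2 h3)).2⟩
      rw [e1, e2]
    · intro L hL; rfl
  rw [h, Finset.sum_product]
  rw [Finset.mul_sum]
  apply Finset.sum_congr rfl
  intro M hM
  simp only []
  rw [Finset.sum_const, Finset.card_powerset, smul_eq_mul]


def cLf (L : Finset (Fin m × Fin m)) (x : St m) : ℕ :=
  ∑ q, (x q).val * (x (QKmap m L q)).val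

def CC (K : Finset (Fin m × Fin m)) (x : St m) : ℕ := ∑ L ∈ K.powerset, cLf L x

def Kq (K : Finset (Fin m × Fin m)) (q : Lab m) : Finset (Fin m × Fin m) := K.filter fun p => q p.2 = 1

def zq (K : Finset (Fin m × Fin m)) (q : Lab m) : ℕ := (K.filter fun p => q p.2 = 0).card

def RR (K : Finset (Fin m × Fin m)) (x : St m) (q : Lab m) : ℕ :=
  ∑ M ∈ (Kq K q).powerset, (x (QKmap m M q)).val

def SB (K : Finset (Fin m × Fin m)) (x : St m) : ℕ := ∑ q ∈ fixSet (F2 m K) (fun _ => 1), (x q).val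

def TB (K : Finset (Fin m × Fin m)) (x : St m) : ℕ := ∑ q ∈ univ.filter (fun q => zq K q = 1), (x q).val

lemma sdiff_Kq (K : Finset (Fin m × Fin m)) (q : Lab m) : K \ Kq K q = K.filter (fun p => q p.2 = 0) := by
  ext p
  simp only [Finset.mem_sdiff, Kq, Finset.mem_filter]
  constructor
  · rintro ⟨hp, h⟩
    refine ⟨hp, ?_⟩
    by_contra h0
    cases zmod2_cases (q p.2) with
    | inl h' => exact h0 h'
    | inr h' => exact h ⟨hp, h'⟩
  · rintro ⟨hp, h⟩
    refine ⟨hp, fun hc => ?_⟩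
    rw [hc.2] at h
    exact absurd h (by decide)

lemma CC_eq (K : Finset (Fin m × Fin m)) (x : St m) :
    CC K x = ∑ q, (x q).val * (2 ^ zq K q * RR K x q) := by
  rw [CC]
  unfold cLf
  rw [Finset.sum_comm]
  apply Finset.sum_congr rfl
  intro q _
  rw [← Finset.mul_sum]
  congr 1
  have h1 : ∀ L ∈ K.powerset, (x (QKmap m L q)).val = (x (QKmap m (L ∩ Kq K q) q)).val := by
    intro L hL
    have hLK := Finset.mem_powerset.mp hL
    have h2 : L.filter (fun p => q p.2 = 1) = L ∩ Kq K q := by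
      ext p
      simp only [Finset.mem_filter, Finset.mem_inter, Kq]
      constructor
      · rintro ⟨h3, h4⟩; exact ⟨h3, hLK h3, h4⟩
      · rintro ⟨h3, _, h4⟩; exact ⟨h3, h4⟩
    rw [Q_filter L q, h2]
  rw [Finset.sum_congr rfl h1,
    sum_powerset_inter K (Kq K q) (Finset.filter_subset _ _) (fun M => (x (QKmap m M q)).val)]
  rw [sdiff_Kq K]
  rfl

lemma zone0_eq (K : Finset (Fin m × Fin m)) : univ.filter (fun q : Lab m => zq K q = 0) = fixSet (F2 m K) (fun _ => 1) := by
  ext q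
  simp only [Finset.mem_filter, Finset.mem_univ, true_and, mem_fixSet, zq,
    Finset.card_eq_zero, Finset.filter_eq_empty_iff, F2, Finset.mem_image]
  constructor
  · rintro h a ⟨p, hp, rfl⟩
    cases zmod2_cases (q p.2) with
    | inl h' => exact absurd h' (h hp)
    | inr h' => exact h'
  · intro h p hp h0
    have := h p.2 ⟨p, hp, rfl⟩
    rw [h0] at this
    exact absurd this (by decide)

lemma CC_split (K : Finset (Fin m × Fin m)) (x : St m) : ∃ k : ℕ,
    CC K x = (∑ q ∈ univ.filter (fun q => zq K q = 0), (x q).val * RR K x q)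
      + 2 * (∑ q ∈ univ.filter (fun q => zq K q = 1), (x q).val * RR K x q) + 4 * k := by
  rw [CC_eq]
  set f : Lab m → ℕ := fun q => (x q).val * (2 ^ zq K q * RR K x q) with hf
  have h1 := Finset.sum_filter_add_sum_filter_not (univ : Finset (Lab m))
    (fun q => zq K q = 0) f
  have h2 := Finset.sum_filter_add_sum_filter_not
    (univ.filter (fun q : Lab m => ¬ zq K q = 0)) (fun q => zq K q = 1) f
  rw [Finset.filter_filter, Finset.filter_filter] at h2
  have e0 : ∑ q ∈ univ.filter (fun q => zq K q = 0), f q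
      = ∑ q ∈ univ.filter (fun q => zq K q = 0), (x q).val * RR K x q := by
    apply Finset.sum_congr rfl
    intro q hq
    have hz : zq K q = 0 := (Finset.mem_filter.mp hq).2
    rw [hf]; simp only [hz, pow_zero, one_mul]
  have e1 : ∑ q ∈ univ.filter (fun q => ¬ zq K q = 0 ∧ zq K q = 1), f q
      = 2 * ∑ q ∈ univ.filter (fun q => zq K q = 1), (x q).val * RR K x q := by
    have heq : univ.filter (fun q : Lab m => ¬ zq K q = 0 ∧ zq K q = 1)
        = univ.filter (fun q : Lab m => zq K q = 1) := by
      apply Finset.filter_congr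
      intro q _
      constructor
      · exact fun h => h.2
      · intro h; exact ⟨by omega, h⟩
    rw [heq, Finset.mul_sum]
    apply Finset.sum_congr rfl
    intro q hq
    have hz : zq K q = 1 := (Finset.mem_filter.mp hq).2
    rw [hf]; simp only [hz, pow_one]; ring
  have e2 : ∃ k, ∑ q ∈ univ.filter (fun q => ¬ zq K q = 0 ∧ ¬ zq K q = 1), f q = 4 * k := by
    refine ⟨∑ q ∈ univ.filter (fun q => ¬ zq K q = 0 ∧ ¬ zq K q = 1),
      (x q).val * (2 ^ (zq K q - 2) * RR K x q), ?_⟩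
    rw [Finset.mul_sum]
    apply Finset.sum_congr rfl
    intro q hq
    have hz := (Finset.mem_filter.mp hq).2
    obtain ⟨j, hj⟩ : ∃ j, zq K q = j + 2 := ⟨zq K q - 2, by omega⟩
    rw [hf]; simp only []
    rw [hj, Nat.add_sub_cancel, pow_add]
    ring
  obtain ⟨k, hk⟩ := e2
  refine ⟨k, ?_⟩
  rw [← h1, ← h2, e0, e1, hk]
  ring


lemma Kq_eq_of_fix {q : Lab m} (hq : q ∈ fixSet (F2 m K) fun _ => 1) : Kq K q = K := by
  apply Finset.filter_true_of_mem
  intro p hp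
  exact mem_fixSet.mp hq p.2 (Finset.mem_image_of_mem Prod.snd hp)

lemma RR_eq_SB (hK : distinctPairs m K) (hBF : ∀ l : Fin m, l ∈ F1 m K ∨ l ∈ F2 m K)
    (x : St m) {q : Lab m} (hq : q ∈ fixSet (F2 m K) fun _ => 1) : RR K x q = SB K x := by
  have hqv : ∀ p ∈ K, q p.2 = 1 := fun p hp =>
    mem_fixSet.mp hq p.2 (Finset.mem_image_of_mem Prod.snd hp)
  rw [RR, Kq_eq_of_fix hq, SB]
  apply Finset.sum_nbij' (i := fun M => QKmap m M q)
    (j := fun q' => K.filter fun p => q' p.1 ≠ q p.1)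
  · intro M hM
    rw [mem_fixSet]
    intro a ha
    obtain ⟨p, hp, rfl⟩ := Finset.mem_image.mp ha
    rw [Q_snd hK (Finset.mem_powerset.mp hM) hp q]
    exact hqv p hp
  · intro q' _
    exact Finset.mem_powerset.mpr (Finset.filter_subset _ _)
  · intro M hM
    have hMK := Finset.mem_powerset.mp hM
    ext p
    simp only [Finset.mem_filter]
    constructor
    · rintro ⟨hpK, hne⟩
      by_contra hpM
      have hfst : ∀ p' ∈ M, p'.1 ≠ p.1 := by
        intro p' hp' he
        exact hpM (fst_inj K hK p' (hMK hp') p hpK he ▸ hp')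
      exact hne (Q_notmem_fst q hfst)
    · intro hpM
      refine ⟨hMK hpM, ?_⟩
      rw [Q_fst hK hMK q (fun p' hp' => hqv p' (hMK hp')) hpM]
      exact zmod2_add_one_ne _
  · intro q' hq'
    funext l
    set M' := K.filter fun p => q' p.1 ≠ q p.1 with hM'
    have hM'K : M' ⊆ K := Finset.filter_subset _ _
    rcases hBF l with hl | hl
    · obtain ⟨p, hp, rfl⟩ := Finset.mem_image.mp hl
      by_cases hpM : p ∈ M'
      · rw [Q_fst hK hM'K q (fun p' hp' => hqv p' (hM'K hp')) hpM]
        have hne : q' p.1 ≠ q p.1 := (Finset.mem_filter.mp hpM).2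
        exact (zmod2_ne_iff _ _ hne).symm
      · have hfst : ∀ p'' ∈ M', p''.1 ≠ p.1 := by
          intro p'' hp'' he
          exact hpM ((fst_inj K hK p'' (hM'K hp'') p hp he) ▸ hp'')
        rw [Q_notmem_fst q hfst]
        have hn : ¬ q' p.1 ≠ q p.1 := fun hne => hpM (Finset.mem_filter.mpr ⟨hp, hne⟩)
        exact (not_not.mp hn).symm
    · obtain ⟨p, hp, rfl⟩ := Finset.mem_image.mp hl
      have h1 : ∀ p'' ∈ M', p''.1 ≠ p.2 := by
        intro p'' hp''
        exact cross_ne K hK p'' (hM'K hp'') p hp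
      rw [Q_notmem_fst q h1]
      rw [hqv p hp, mem_fixSet.mp hq' p.2 (Finset.mem_image_of_mem Prod.snd hp)]
  · intro M hM; rfl

lemma zq_Q (hK : distinctPairs m K) {M : Finset (Fin m × Fin m)} (hMK : M ⊆ K) (q : Lab m) :
    zq K (QKmap m M q) = zq K q := by
  unfold zq
  congr 1
  apply Finset.filter_congr
  intro p hp
  rw [Q_snd hK hMK hp q]

lemma Kq_Q (hK : distinctPairs m K) {M : Finset (Fin m × Fin m)} (hMK : M ⊆ K) (q : Lab m) :
    Kq K (QKmap m M q) = Kq K q := by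
  unfold Kq
  apply Finset.filter_congr
  intro p hp
  rw [Q_snd hK hMK hp q]

lemma A1_mod2 (hK : distinctPairs m K) (x : St m) :
    ((∑ q ∈ univ.filter (fun q => zq K q = 1), (x q).val * RR K x q : ℕ) : ZMod 2)
      = ((TB K x : ℕ) : ZMod 2) := by
  have hRR : ∀ q : Lab m, ((RR K x q : ℕ) : ZMod 2)
      = ∑ M ∈ (Kq K q).powerset, ((x (QKmap m M q)).val : ZMod 2) := by
    intro q; rw [RR]; push_cast; rfl
  push_cast
  have hstep : ∀ q : Lab m, ((x q).val : ZMod 2) * ((RR K x q : ℕ) : ZMod 2)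
      = ((x q).val : ZMod 2)
        + ∑ M ∈ ((Kq K q).powerset).erase ∅,
            ((x q).val : ZMod 2) * ((x (QKmap m M q)).val : ZMod 2) := by
    intro q
    rw [hRR, Finset.mul_sum,
      ← Finset.add_sum_erase _ _ (Finset.empty_mem_powerset (Kq K q))]
    congr 1
    rw [Q_empty q, ← Nat.cast_mul, zmod2_val_mul_self]
  rw [Finset.sum_congr rfl (fun q _ => hstep q), Finset.sum_add_distrib]
  have hzero : ∑ q ∈ univ.filter (fun q => zq K q = 1),
      ∑ M ∈ ((Kq K q).powerset).erase ∅,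
        ((x q).val : ZMod 2) * ((x (QKmap m M q)).val : ZMod 2) = 0 := by
    rw [Finset.sum_sigma']
    apply Finset.sum_involution (g := fun a _ => (⟨QKmap m a.2 a.1, a.2⟩ : Σ _ : Lab m, Finset (Fin m × Fin m)))
    · rintro ⟨q, M⟩ ha
      simp only [Finset.mem_sigma, Finset.mem_filter, Finset.mem_univ, true_and,
        Finset.mem_erase, Finset.mem_powerset] at ha
      obtain ⟨hz1, hMne, hMKq⟩ := ha
      have hMK : M ⊆ K := hMKq.trans (Finset.filter_subset _ _)
      have h1 : QKmap m M (QKmap m M q) = q := Q_invol hK hMK q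
      show ((x q).val : ZMod 2) * ((x (QKmap m M q)).val : ZMod 2)
        + ((x (QKmap m M q)).val : ZMod 2) * ((x (QKmap m M (QKmap m M q))).val : ZMod 2) = 0
      rw [h1, mul_comm, CharTwo.add_self_eq_zero]
    · rintro ⟨q, M⟩ ha _
      simp only [Finset.mem_sigma, Finset.mem_filter, Finset.mem_univ, true_and,
        Finset.mem_erase, Finset.mem_powerset] at ha
      obtain ⟨hz1, hMne, hMKq⟩ := ha
      have hMK : M ⊆ K := hMKq.trans (Finset.filter_subset _ _)
      have hqv : ∀ p ∈ M, q p.2 = 1 := fun p hp => (Finset.mem_filter.mp (hMKq hp)).2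
      intro hcon
      exact Q_ne hK hMK hMne q hqv (congrArg Sigma.fst hcon)
    · rintro ⟨q, M⟩ ha
      simp only [Finset.mem_sigma, Finset.mem_filter, Finset.mem_univ, true_and,
        Finset.mem_erase, Finset.mem_powerset] at ha ⊢
      obtain ⟨hz1, hMne, hMKq⟩ := ha
      have hMK : M ⊆ K := hMKq.trans (Finset.filter_subset _ _)
      refine ⟨by rw [zq_Q hK hMK q]; exact hz1, hMne, ?_⟩
      rw [Kq_Q hK hMK q]; exact hMKq
    · rintro ⟨q, M⟩ ha
      simp only [Finset.mem_sigma, Finset.mem_filter, Finset.mem_univ, true_and,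
        Finset.mem_erase, Finset.mem_powerset] at ha
      obtain ⟨hz1, hMne, hMKq⟩ := ha
      have hMK : M ⊆ K := hMKq.trans (Finset.filter_subset _ _)
      show (⟨QKmap m M (QKmap m M q), M⟩ : Σ _ : Lab m, Finset (Fin m × Fin m)) = ⟨q, M⟩
      rw [Q_invol hK hMK q]
  rw [hzero, add_zero, TB]
  push_cast
  rfl

lemma CC_mod4 (hK : distinctPairs m K) (hBF : ∀ l : Fin m, l ∈ F1 m K ∨ l ∈ F2 m K)
    (x : St m) :
    ((CC K x : ℕ) : ZMod 4) = ((SB K x : ℕ) : ZMod 4) ^ 2 + 2 * ((TB K x : ℕ) : ZMod 4) := by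
  obtain ⟨k, hk⟩ := CC_split K x
  set A1 : ℕ := ∑ q ∈ univ.filter (fun q => zq K q = 1), (x q).val * RR K x q with hA1def
  have hA0 : ∑ q ∈ univ.filter (fun q => zq K q = 0), (x q).val * RR K x q
      = SB K x * SB K x := by
    rw [zone0_eq K]
    have hcong : ∀ q ∈ fixSet (F2 m K) (fun _ => 1),
        (x q).val * RR K x q = (x q).val * SB K x :=
      fun q hq => by rw [RR_eq_SB hK hBF x hq]
    rw [Finset.sum_congr rfl hcong, ← Finset.sum_mul]
    rfl
  have hCC : CC K x = SB K x * SB K x + 2 * A1 + 4 * k := by rw [hk, hA0]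
  have hmod : (A1 : ZMod 2) = ((TB K x : ℕ) : ZMod 2) := A1_mod2 hK x
  have h2 : A1 ≡ TB K x [MOD 2] := (ZMod.natCast_eq_natCast_iff _ _ 2).mp hmod
  have h4' : 2 * A1 ≡ 2 * TB K x [MOD 4] := by simpa using h2.mul_left' 2
  have hc : ((2 * A1 : ℕ) : ZMod 4) = ((2 * TB K x : ℕ) : ZMod 4) :=
    (ZMod.natCast_eq_natCast_iff _ _ 4).mpr h4'
  push_cast at hc
  rw [hCC]
  push_cast
  rw [hc]
  have h40 : (4 : ZMod 4) = 0 := by decide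
  rw [h40]
  ring


lemma sum_val_add (s : Finset (Lab m)) (x v : St m) :
    ((∑ q ∈ s, ((x + v) q).val : ℕ) : ZMod 4)
      = ((∑ q ∈ s, (x q).val : ℕ) : ZMod 4) + ((∑ q ∈ s, (v q).val : ℕ) : ZMod 4)
        + 2 * ((∑ q ∈ s, (x q).val * (v q).val : ℕ) : ZMod 4) := by
  push_cast
  rw [Finset.mul_sum, ← Finset.sum_add_distrib, ← Finset.sum_add_distrib]
  apply Finset.sum_congr rfl
  intro q _
  have := val_add4 (x q) (v q)
  simpa using this

lemma CC_shift (hK : distinctPairs m K) (hBF : ∀ l : Fin m, l ∈ F1 m K ∨ l ∈ F2 m K)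
    (x v : St m) :
    ((CC K (x + v) : ℕ) : ZMod 4) = ((CC K x : ℕ) : ZMod 4)
      + ((∑ q ∈ fixSet (F2 m K) (fun _ => 1), (v q).val : ℕ) : ZMod 4) ^ 2
      + 2 * ((SB K x : ℕ) : ZMod 4)
          * ((∑ q ∈ fixSet (F2 m K) (fun _ => 1), (v q).val : ℕ) : ZMod 4)
      + 2 * ((∑ q ∈ univ.filter (fun q => zq K q = 1), (v q).val : ℕ) : ZMod 4) := by
  rw [CC_mod4 hK hBF (x + v), CC_mod4 hK hBF x]
  have hS := sum_val_add (fixSet (F2 m K) (fun _ => 1)) x v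
  have hT := sum_val_add (univ.filter (fun q => zq K q = 1)) x v
  have hSB : ((SB K (x + v) : ℕ) : ZMod 4) = ((SB K x : ℕ) : ZMod 4)
      + ((∑ q ∈ fixSet (F2 m K) (fun _ => 1), (v q).val : ℕ) : ZMod 4)
      + 2 * ((∑ q ∈ fixSet (F2 m K) (fun _ => 1), (x q).val * (v q).val : ℕ) : ZMod 4) := hS
  have hTB : ((TB K (x + v) : ℕ) : ZMod 4) = ((TB K x : ℕ) : ZMod 4)
      + ((∑ q ∈ univ.filter (fun q => zq K q = 1), (v q).val : ℕ) : ZMod 4)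
      + 2 * ((∑ q ∈ univ.filter (fun q => zq K q = 1), (x q).val * (v q).val : ℕ) : ZMod 4) := hT
  rw [hSB, hTB]
  have h4 : (4 : ZMod 4) = 0 := by decide
  set S := ((SB K x : ℕ) : ZMod 4)
  set T := ((TB K x : ℕ) : ZMod 4)
  set W := ((∑ q ∈ fixSet (F2 m K) (fun _ => 1), (v q).val : ℕ) : ZMod 4)
  set P := ((∑ q ∈ fixSet (F2 m K) (fun _ => 1), (x q).val * (v q).val : ℕ) : ZMod 4)
  set W' := ((∑ q ∈ univ.filter (fun q => zq K q = 1), (v q).val : ℕ) : ZMod 4)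
  set P' := ((∑ q ∈ univ.filter (fun q => zq K q = 1), (x q).val * (v q).val : ℕ) : ZMod 4)
  linear_combination (P ^ 2 + S * P + W * P + P') * h4

def cpat (p : Fin m × Fin m) : Fin m → ZMod 2 := fun l => if l = p.2 then 0 else 1

lemma zone1_eq (hK : distinctPairs m K) :
    univ.filter (fun q : Lab m => zq K q = 1)
      = K.biUnion (fun p => fixSet (F2 m K) (cpat p)) := by
  ext q
  simp only [Finset.mem_filter, Finset.mem_univ, true_and, Finset.mem_biUnion]
  constructor
  · intro h
    obtain ⟨p, hp⟩ := Finset.card_eq_one.mp h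
    have hpK : p ∈ K := by
      have : p ∈ K.filter (fun p => q p.2 = 0) := hp ▸ Finset.mem_singleton_self p
      exact (Finset.mem_filter.mp this).1
    have hp0 : q p.2 = 0 := by
      have : p ∈ K.filter (fun p => q p.2 = 0) := hp ▸ Finset.mem_singleton_self p
      exact (Finset.mem_filter.mp this).2
    refine ⟨p, hpK, mem_fixSet.mpr ?_⟩
    intro a ha
    obtain ⟨p', hp', rfl⟩ := Finset.mem_image.mp ha
    unfold cpat
    by_cases he : p'.2 = p.2
    · rw [if_pos he, he]; exact hp0
    · rw [if_neg he]
      by_contra h1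
      have h0 : q p'.2 = 0 := zmod2_ne_one h1
      have : p' ∈ K.filter (fun p => q p.2 = 0) := Finset.mem_filter.mpr ⟨hp', h0⟩
      rw [hp, Finset.mem_singleton] at this
      exact he (by rw [this])
  · rintro ⟨p, hpK, hfix⟩
    show zq K q = 1
    rw [zq, Finset.card_eq_one]
    refine ⟨p, ?_⟩
    ext p'
    simp only [Finset.mem_filter, Finset.mem_singleton]
    constructor
    · rintro ⟨hp'K, h0⟩
      have := mem_fixSet.mp hfix p'.2 (Finset.mem_image_of_mem Prod.snd hp'K)
      unfold cpat at this
      by_cases he : p'.2 = p.2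
      · exact snd_inj K hK p' hp'K p hpK he
      · rw [if_neg he] at this
        rw [this] at h0
        exact absurd h0 (by decide)
    · rintro rfl
      refine ⟨hpK, ?_⟩
      have := mem_fixSet.mp hfix p'.2 (Finset.mem_image_of_mem Prod.snd hpK)
      unfold cpat at this
      rwa [if_pos rfl] at this

lemma zone1_sum (hK : distinctPairs m K) (g : Lab m → ℕ) :
    ∑ q ∈ univ.filter (fun q : Lab m => zq K q = 1), g q
      = ∑ p ∈ K, ∑ q ∈ fixSet (F2 m K) (cpat p), g q := by
  rw [zone1_eq hK]
  apply Finset.sum_biUnion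
  intro p hp p' hp' hne
  show Disjoint (fixSet (F2 m K) (cpat p)) (fixSet (F2 m K) (cpat p'))
  rw [Finset.disjoint_left]
  intro q hq hq'
  have h1 := mem_fixSet.mp hq p.2 (Finset.mem_image_of_mem Prod.snd (by exact_mod_cast hp))
  have h2 := mem_fixSet.mp hq' p.2 (Finset.mem_image_of_mem Prod.snd (by exact_mod_cast hp))
  unfold cpat at h1 h2
  rw [if_pos rfl] at h1
  have hne2 : p.2 ≠ p'.2 := by
    intro he
    exact hne (snd_inj K hK p (by exact_mod_cast hp) p' (by exact_mod_cast hp') he)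
  rw [if_neg hne2] at h2
  rw [h1] at h2
  exact absurd h2 (by decide)


lemma list_prod_diag (l : List (Finset (Fin m × Fin m))) :
    (l.map fun L => UPg m (QKmap m L)).prod
      = Matrix.diagonal (fun x : St m => Complex.I ^ (l.map fun L => cLf L x).sum) := by
  induction l with
  | nil => simp
  | cons L t ih =>
    simp only [List.map_cons, List.prod_cons, List.sum_cons, ih]
    rw [show UPg m (QKmap m L)
        = Matrix.diagonal (fun x : St m => Complex.I ^ cLf L x) from rfl]
    rw [Matrix.diagonal_mul_diagonal]
    apply congrArg Matrix.diagonal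
    funext x
    rw [pow_add]

lemma Vprod_diag : Vprod m K = Matrix.diagonal (fun x : St m => Complex.I ^ CC K x) := by
  rw [Vprod, list_prod_diag]
  apply congrArg Matrix.diagonal
  funext x
  rw [Finset.sum_map_toList]
  rfl

lemma Ipow_congr {a b : ℕ} (h : a ≡ b [MOD 4]) : Complex.I ^ a = Complex.I ^ b := by
  have e : ∀ c : ℕ, Complex.I ^ c = Complex.I ^ (c % 4) := by
    intro c
    conv_lhs => rw [← Nat.div_add_mod c 4]
    rw [pow_add, pow_mul, Complex.I_pow_four, one_pow, one_mul]
  rw [e a, e b, h]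

lemma Nwt_zero (x : St m) : Nwt m 0 x = 0 := by
  rw [Nwt]
  apply Finset.card_eq_zero.mpr
  apply Finset.filter_eq_empty_iff.mpr
  intro q _
  rintro ⟨h0, _⟩
  exact absurd h0 (by simp)

lemma Nwt_eq_SB (x : St m) : Nwt m (vA m (F2 m K)) x = SB K x := by
  rw [Nwt, Finset.card_filter, SB, fixSet, Finset.sum_filter]
  apply Finset.sum_congr rfl
  intro q _
  by_cases h : ∀ a ∈ F2 m K, q a = 1
  · rw [if_pos h, zmod2_val_eq_ite]
    have hv : vA m (F2 m K) q = 1 := (vA_eq_one_iff _ q).mpr h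
    by_cases hx : x q = 1
    · rw [if_pos hx, if_pos ⟨hv, hx⟩]
    · rw [if_neg hx, if_neg (fun hc => hx hc.2)]
  · rw [if_neg h, if_neg (fun hc => h ((vA_eq_one_iff _ q).mp hc.1))]

end WithK
end RM15



open RM15 Finset in
/-- For `K` a set of `m/2` ordered pairs with all `m` components pairwise
distinct and `B = F₁(K)`, the product `V = ∏_{L ⊆ K} U_P(Q(L))` commutes with
every `Z(w)`, conjugates `X(v_B)` to `(-1)^{m/2}·i` times
`X(v_B) Z(v_{Bᶜ}) Z(u)` for some codeword `u ∈ RM(m/2-1, m)`, and conjugates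
every other logical `X(v_D)` to `X(v_D) Z(u_D)` for some codeword `u_D`:
it implements the addressable logical phase gate on the logical qubit
`F₁(K)`. -/
theorem stmt15 (m : ℕ) (hm : Even m) (h0 : 0 < m) (K : Finset (Fin m × Fin m))
    (hK : distinctPairs m K) (hKcard : K.card = m / 2) :
    (∀ w : St m, Vprod m K * Zmat m w = Zmat m w * Vprod m K) ∧
    (∃ u ∈ RMcode m (m / 2 - 1),
      Vprod m K * Xmat m (vA m (F1 m K)) * (Vprod m K)⁻¹ =
        (((-1 : ℂ) ^ (m / 2)) * Complex.I) •
          (Xmat m (vA m (F1 m K)) * Zmat m (vA m (F1 m K)ᶜ) * Zmat m u)) ∧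
    (∀ D : Finset (Fin m), D.card = m / 2 → D ≠ F1 m K →
      ∃ u ∈ RMcode m (m / 2 - 1),
        Vprod m K * Xmat m (vA m D) * (Vprod m K)⁻¹ = Xmat m (vA m D) * Zmat m u) := by
  have hF1card : (F1 m K).card = K.card :=
    Finset.card_image_of_injOn (fun p hp p' hp' h => fst_inj K hK p hp p' hp' h)
  have hF2card : (F2 m K).card = K.card :=
    Finset.card_image_of_injOn (fun p hp p' hp' h => snd_inj K hK p hp p' hp' h)
  have hdisj : Disjoint (F1 m K) (F2 m K) := by
    rw [Finset.disjoint_left]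
    intro a h1 h2
    obtain ⟨p, hp, rfl⟩ := Finset.mem_image.mp h1
    obtain ⟨p', hp', he⟩ := Finset.mem_image.mp h2
    exact cross_ne K hK p hp p' hp' he.symm
  have hunion : F1 m K ∪ F2 m K = univ := by
    apply Finset.eq_univ_of_card
    rw [Finset.card_union_of_disjoint hdisj, hF1card, hF2card, hKcard]
    have : Fintype.card (Fin m) = m := Fintype.card_fin m
    rw [this]
    obtain ⟨t, ht⟩ := hm
    omega
  have hBF : ∀ l : Fin m, l ∈ F1 m K ∨ l ∈ F2 m K := fun l => by
    have h := Finset.mem_univ l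
    rw [← hunion] at h
    exact Finset.mem_union.mp h
  have hcompl : (F1 m K)ᶜ = F2 m K := by
    rw [Finset.compl_eq_univ_sdiff, ← hunion, Finset.union_sdiff_cancel_left hdisj]
  have hV : Vprod m K = Matrix.diagonal (fun x : St m => Complex.I ^ CC K x) := Vprod_diag
  have hVinv : (Vprod m K)⁻¹
      = Matrix.diagonal (fun x : St m => Complex.I ^ (3 * CC K x)) := by
    apply Matrix.inv_eq_left_inv
    rw [hV, Matrix.diagonal_mul_diagonal, show (1 : Matrix (St m) (St m) ℂ)
      = Matrix.diagonal (fun _ => 1) from Matrix.diagonal_one.symm]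
    apply congrArg Matrix.diagonal
    funext x
    rw [← pow_add, show 3 * CC K x + CC K x = 4 * CC K x by ring, pow_mul,
      Complex.I_pow_four, one_pow]
  refine ⟨?_, ?_, ?_⟩
  · -- part (i)
    intro w
    rw [hV, Zmat, Matrix.diagonal_mul_diagonal, Matrix.diagonal_mul_diagonal]
    apply congrArg Matrix.diagonal
    funext x
    exact mul_comm _ _
  · -- part (ii)
    refine ⟨0, Submodule.zero_mem _, ?_⟩
    have hWB : ∑ q ∈ fixSet (F2 m K) (fun _ => 1), (vA m (F1 m K) q).val = 1 := by
      rw [sum_vA_fixSet (F2 m K) (fun _ => 1) (F1 m K) (fun a _ _ => rfl)]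
      have hcard : (F2 m K ∪ F1 m K).card = m := by
        rw [Finset.union_comm, hunion, Finset.card_univ, Fintype.card_fin]
      rw [hcard, Nat.sub_self, pow_zero]
    have hW'B : ∑ q ∈ univ.filter (fun q => zq K q = 1), (vA m (F1 m K) q).val
        = K.card := by
      rw [zone1_sum hK]
      have heach : ∀ p ∈ K,
          ∑ q ∈ fixSet (F2 m K) (cpat p), (vA m (F1 m K) q).val = 1 := by
        intro p hp
        rw [sum_vA_fixSet (F2 m K) (cpat p) (F1 m K) ?_]
        · have hcard : (F2 m K ∪ F1 m K).card = m := by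
            rw [Finset.union_comm, hunion, Finset.card_univ, Fintype.card_fin]
          rw [hcard, Nat.sub_self, pow_zero]
        · intro a ha haB
          exact absurd haB (Finset.disjoint_right.mp hdisj ha)
      rw [Finset.sum_congr rfl heach, Finset.sum_const, smul_eq_mul, mul_one]
    have hkey : ∀ x : St m,
        CC K (x + vA m (F1 m K)) ≡ CC K x + (1 + 2 * SB K x + 2 * K.card) [MOD 4] := by
      intro x
      apply (ZMod.natCast_eq_natCast_iff _ _ 4).mp
      have hs := CC_shift hK hBF x (vA m (F1 m K))
      rw [hWB, hW'B] at hs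
      rw [hs]
      push_cast
      ring
    rw [hVinv, hV]
    ext y x
    rw [Matrix.mul_diagonal, Matrix.diagonal_mul, Matrix.smul_apply, Zmat, Zmat,
      Matrix.mul_diagonal, Matrix.mul_diagonal]
    by_cases hyx : y = x + vA m (F1 m K)
    · subst hyx
      rw [show Xmat m (vA m (F1 m K)) (x + vA m (F1 m K)) x = 1 from if_pos rfl]
      rw [Nwt_zero, pow_zero, mul_one, mul_one, one_mul]
      rw [hcompl, Nwt_eq_SB]
      rw [← pow_add]
      have hmod : CC K (x + vA m (F1 m K)) + 3 * CC K x
          ≡ 1 + 2 * SB K x + 2 * K.card [MOD 4] := by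
        have h1 := (hkey x).add_right (3 * CC K x)
        have h2 : CC K x + (1 + 2 * SB K x + 2 * K.card) + 3 * CC K x
            = 4 * CC K x + (1 + 2 * SB K x + 2 * K.card) := by ring
        rw [h2] at h1
        refine h1.trans ?_
        have h3 : (4 : ℕ) * CC K x ≡ 0 [MOD 4] :=
          Nat.modEq_zero_iff_dvd.mpr ⟨CC K x, rfl⟩
        have h4 := h3.add_right (1 + 2 * SB K x + 2 * K.card)
        rwa [zero_add] at h4
      rw [Ipow_congr hmod]
      rw [pow_add, pow_add, pow_mul, pow_mul, Complex.I_sq, pow_one, ← hKcard,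
        smul_eq_mul]
      ring
    · rw [show Xmat m (vA m (F1 m K)) y x = 0 from if_neg hyx]
      simp
  · -- part (iii)
    intro D hDcard hDne
    refine ⟨0, Submodule.zero_mem _, ?_⟩
    have hne_univ : F2 m K ∪ D ≠ univ := by
      intro he
      apply hDne
      have hBsub : F1 m K ⊆ D := by
        intro b hb
        have hbu : b ∈ F2 m K ∪ D := he ▸ Finset.mem_univ b
        rcases Finset.mem_union.mp hbu with h | h
        · exact absurd h (Finset.disjoint_left.mp hdisj hb)
        · exact h
      have : F1 m K = D := Finset.eq_of_subset_of_card_le hBsub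
        (by rw [hDcard, hF1card, hKcard])
      exact this.symm
    have hexp : ∃ j, m - (F2 m K ∪ D).card = j + 1 := by
      have hle : (F2 m K ∪ D).card ≤ m := by
        have := Finset.card_le_univ (F2 m K ∪ D)
        rwa [Fintype.card_fin] at this
      have hlt : (F2 m K ∪ D).card < m := by
        rcases lt_or_eq_of_le hle with h | h
        · exact h
        · exact absurd (Finset.eq_univ_of_card _ (by rw [h, Fintype.card_fin])) hne_univ
      exact ⟨m - (F2 m K ∪ D).card - 1, by omega⟩
    obtain ⟨j, hj⟩ := hexp
    have hWD : ∃ w, ∑ q ∈ fixSet (F2 m K) (fun _ => 1), (vA m D q).val = 2 * w := by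
      rw [sum_vA_fixSet (F2 m K) (fun _ => 1) D (fun a _ _ => rfl), hj]
      exact ⟨2 ^ j, by rw [pow_succ, mul_comm]⟩
    have hW'D : ∃ w, ∑ q ∈ univ.filter (fun q => zq K q = 1), (vA m D q).val = 2 * w := by
      rw [zone1_sum hK]
      have heach : ∀ p ∈ K, 2 ∣ ∑ q ∈ fixSet (F2 m K) (cpat p), (vA m D q).val := by
        intro p hp
        by_cases hpD : p.2 ∈ D
        · rw [sum_vA_fixSet_zero (F2 m K) (cpat p) D
            (Finset.mem_image_of_mem Prod.snd hp) hpD (by rw [cpat, if_pos rfl])]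
          exact dvd_zero 2
        · rw [sum_vA_fixSet (F2 m K) (cpat p) D ?_]
          · rw [hj, pow_succ]
            exact ⟨2 ^ j, mul_comm _ _⟩
          · intro a ha haD
            rw [cpat, if_neg]
            intro hae
            exact hpD (hae ▸ haD)
      have := Finset.dvd_sum heach
      obtain ⟨w, hw⟩ := this
      exact ⟨w, hw⟩
    obtain ⟨w1, hw1⟩ := hWD
    obtain ⟨w2, hw2⟩ := hW'D
    have hkey : ∀ x : St m, CC K (x + vA m D) ≡ CC K x [MOD 4] := by
      intro x
      apply (ZMod.natCast_eq_natCast_iff _ _ 4).mp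
      have hs := CC_shift hK hBF x (vA m D)
      rw [hw1, hw2] at hs
      rw [hs]
      push_cast
      have h4 : (4 : ZMod 4) = 0 := by decide
      set S := ((SB K x : ℕ) : ZMod 4)
      linear_combination ((w1 : ZMod 4) ^ 2 + S * w1 + (w2 : ZMod 4)) * h4
    rw [hVinv, hV]
    ext y x
    rw [Matrix.mul_diagonal, Matrix.diagonal_mul, Zmat, Matrix.mul_diagonal]
    by_cases hyx : y = x + vA m D
    · subst hyx
      rw [show Xmat m (vA m D) (x + vA m D) x = 1 from if_pos rfl]
      rw [Nwt_zero, pow_zero, mul_one, one_mul]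
      rw [← pow_add]
      have hmod : CC K (x + vA m D) + 3 * CC K x ≡ 0 [MOD 4] := by
        have h1 := (hkey x).add_right (3 * CC K x)
        have h2 : CC K x + 3 * CC K x = 4 * CC K x := by ring
        rw [h2] at h1
        exact h1.trans (Nat.modEq_zero_iff_dvd.mpr ⟨CC K x, rfl⟩)
      rw [Ipow_congr hmod, pow_zero]
    · rw [show Xmat m (vA m D) y x = 0 from if_neg hyx]
      ring
end

section
/- Let m be a positive even number, n = 2^m, and let H_n be the transversal Hadamard matrix on qubits indexed by the label set ι = (Fin m → ZMod 2): the complex matrix whose (y,x) entry is 2^(−n/2)·(−1)^{N(y,x)}, where N(y,x) is the number of q ∈ ι with y(q) = x(q) = 1. Then: (i) for every w : ι → ZMod 2, H_n * X(w) * H_n⁻¹ = Z(w) and H_n * Z(w) * H_n⁻¹ = X(w); (ii) conjugation by H_n maps the stabilizer group S of the quantum Reed–Muller code QRM(m) onto itself; and (iii) for every B ⊆ Fin m with |B| = m/2, conjugation by H_n sends the logical operator X̄(B) = X(v_B) to Z̄(Bᶜ) = Z(v_B) and sends Z̄(B) = Z(v_{Bᶜ}) to X̄(Bᶜ) = X(v_{Bᶜ}).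 (Thus H^{⊗n} applies a logical Hadamard on every logical qubit followed by the logical swaps pairing each logical qubit B with Bᶜ.) -/
/-- The transversal Hadamard `H^{⊗n}` on the `n = 2^m` qubits: the matrix with
`(y, x)` entry `2^{-n/2} · (-1)^{N(y,x)}` (here `2^{-n/2} = (√2)⁻ⁿ`). -/
noncomputable def Hn (m : ℕ) : Matrix (St m) (St m) ℂ :=
  Matrix.of fun y x =>
    ((Real.sqrt 2 : ℝ) : ℂ)⁻¹ ^ (2 ^ m) * (-1) ^ Nwt m y x

section Aux

lemma zmod2_cases (a : ZMod 2) : a = 0 ∨ a = 1 := by revert a; decide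

lemma Nwt_eq (m : ℕ) (w x : St m) :
    Nwt m w x = ∑ q, (w q).val * (x q).val := by
  unfold Nwt
  rw [Finset.card_filter]
  refine Finset.sum_congr rfl fun q _ => ?_
  rcases zmod2_cases (w q) with h1 | h1 <;> rcases zmod2_cases (x q) with h2 | h2 <;>
    simp [h1, h2, ZMod.val_one]

lemma chi_prod (m : ℕ) (w x : St m) :
    ((-1 : ℂ)) ^ Nwt m w x = ∏ q, (-1 : ℂ) ^ ((w q).val * (x q).val) := by
  rw [Nwt_eq, Finset.prod_pow_eq_pow_sum]

lemma Nwt_comm (m : ℕ) (w x : St m) : Nwt m w x = Nwt m x w := by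
  unfold Nwt; congr 1; ext q; simp [and_comm]

lemma pow_val_add (a b c : ZMod 2) :
    (-1 : ℂ) ^ (a.val * (b + c).val) = (-1) ^ (a.val * b.val) * (-1) ^ (a.val * c.val) := by
  rcases zmod2_cases a with h | h <;> rcases zmod2_cases b with h2 | h2 <;>
    rcases zmod2_cases c with h3 | h3 <;> simp [h, h2, h3, ZMod.val_one, ZMod.val_add]

lemma chi_add_right (m : ℕ) (w x y : St m) :
    (-1 : ℂ) ^ Nwt m w (x + y) = (-1) ^ Nwt m w x * (-1) ^ Nwt m w y := by
  rw [chi_prod, chi_prod, chi_prod, ← Finset.prod_mul_distrib]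
  exact Finset.prod_congr rfl fun q _ => pow_val_add _ _ _

lemma chi_add_left (m : ℕ) (w w' x : St m) :
    (-1 : ℂ) ^ Nwt m (w + w') x = (-1) ^ Nwt m w x * (-1) ^ Nwt m w' x := by
  rw [Nwt_comm, chi_add_right, Nwt_comm m x w, Nwt_comm m x w']

lemma sum_zmod2 (a : ZMod 2) :
    (∑ b : ZMod 2, (-1 : ℂ) ^ (a.val * b.val)) = if a = 0 then 2 else 0 := by
  have huniv : (Finset.univ : Finset (ZMod 2)) = {0, 1} := by decide
  rcases zmod2_cases a with h | h <;>
    simp [huniv, h, ZMod.val_one, Finset.sum_insert, Finset.mem_singleton]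

lemma sum_chi (m : ℕ) (w : St m) :
    (∑ x : St m, (-1 : ℂ) ^ Nwt m w x)
      = if w = 0 then (2 : ℂ) ^ (2 ^ m) else 0 := by
  have h1 : ∀ x : St m,
      (-1 : ℂ) ^ Nwt m w x = ∏ q, (-1 : ℂ) ^ ((w q).val * (x q).val) := chi_prod m w
  simp_rw [h1]
  rw [← Fintype.piFinset_univ,
    ← Finset.prod_univ_sum (f := fun q (b : ZMod 2) => (-1:ℂ) ^ ((w q).val * b.val))]
  have h2 : ∀ q : Lab m,
      (∑ b : ZMod 2, (-1 : ℂ) ^ ((w q).val * b.val)) = if w q = 0 then 2 else 0 :=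
    fun q => sum_zmod2 (w q)
  simp_rw [h2]
  by_cases hw : w = 0
  · subst hw
    simp [Finset.card_univ]
  · obtain ⟨q, hq⟩ : ∃ q, w q ≠ 0 := by
      by_contra h; push_neg at h; exact hw (funext h)
    rw [if_neg hw]
    exact Finset.prod_eq_zero (Finset.mem_univ q) (by simp [hq])

lemma add_eq_zero_iff_St (m : ℕ) (y z : St m) : y + z = 0 ↔ y = z := by
  constructor
  · intro h
    funext q
    have hq := congrFun h q
    have : ∀ a b : ZMod 2, a + b = 0 → a = b := by decide
    exact this _ _ hq
  · rintro rfl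
    funext q
    have : ∀ a : ZMod 2, a + a = 0 := by decide
    exact this _

lemma HH (m : ℕ) : Hn m * Hn m = 1 := by
  ext y z
  simp only [Matrix.mul_apply, Hn, Matrix.of_apply]
  have key : ∀ x : St m, ((Real.sqrt 2 : ℝ) : ℂ)⁻¹ ^ (2 ^ m) * (-1 : ℂ) ^ Nwt m y x *
      (((Real.sqrt 2 : ℝ) : ℂ)⁻¹ ^ (2 ^ m) * (-1 : ℂ) ^ Nwt m x z) =
      (((Real.sqrt 2 : ℝ) : ℂ)⁻¹ ^ (2 ^ m) * ((Real.sqrt 2 : ℝ) : ℂ)⁻¹ ^ (2 ^ m)) *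
        (-1 : ℂ) ^ Nwt m (y + z) x := by
    intro x
    rw [chi_add_left]
    have hx : (-1 : ℂ) ^ Nwt m x z = (-1 : ℂ) ^ Nwt m z x := by rw [Nwt_comm]
    rw [hx]; ring
  simp_rw [key]
  rw [← Finset.mul_sum, sum_chi]
  have hs : ((Real.sqrt 2 : ℝ) : ℂ)⁻¹ ^ (2 ^ m) * ((Real.sqrt 2 : ℝ) : ℂ)⁻¹ ^ (2 ^ m) *
      (2 : ℂ) ^ (2 ^ m) = 1 := by
    rw [← mul_pow, ← mul_pow]
    have h2 : ((Real.sqrt 2 : ℝ) : ℂ)⁻¹ * ((Real.sqrt 2 : ℝ) : ℂ)⁻¹ * 2 = 1 := by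
      have hs2 : ((Real.sqrt 2 : ℝ) : ℂ) * ((Real.sqrt 2 : ℝ) : ℂ) = 2 := by
        rw [← Complex.ofReal_mul]
        norm_num [← Real.sqrt_mul_self (by norm_num : (0:ℝ) ≤ 2)]
      rw [← mul_inv, hs2]
      norm_num
    rw [h2, one_pow]
  by_cases hyz : y = z
  · subst hyz
    rw [if_pos (by rw [add_eq_zero_iff_St]), hs, Matrix.one_apply_eq]
  · rw [if_neg (by rw [add_eq_zero_iff_St]; exact hyz), mul_zero,
      Matrix.one_apply_ne hyz]

lemma Hn_inv (m : ℕ) : (Hn m)⁻¹ = Hn m := Matrix.inv_eq_right_inv (HH m)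

lemma HX (m : ℕ) (w : St m) : Hn m * Xmat m w = Zmat m w * Hn m := by
  ext y x
  rw [Matrix.mul_apply]
  have key : ∀ t : St m, Hn m y t * Xmat m w t x =
      if t = x + w then Hn m y (x + w) else 0 := by
    intro t
    simp only [Xmat, Matrix.of_apply]
    split_ifs with h
    · subst h; rw [mul_one]
    · rw [mul_zero]
  simp_rw [key, Finset.sum_ite_eq' Finset.univ (x + w) (fun _ => Hn m y (x + w)),
    if_pos (Finset.mem_univ _)]
  simp only [Hn, Zmat, Matrix.of_apply, Matrix.diagonal_mul, Matrix.of_apply]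
  rw [chi_add_right]
  have hyw : (-1 : ℂ) ^ Nwt m y w = (-1 : ℂ) ^ Nwt m w y := by rw [Nwt_comm]
  rw [hyw]; ring

lemma HXH (m : ℕ) (w : St m) : Hn m * Xmat m w * (Hn m)⁻¹ = Zmat m w := by
  rw [Hn_inv, HX, mul_assoc, HH, mul_one]

lemma HXH' (m : ℕ) (w : St m) : Hn m * Xmat m w * Hn m = Zmat m w := by
  have := HXH m w; rwa [Hn_inv] at this

lemma HZH (m : ℕ) (w : St m) : Hn m * Zmat m w * (Hn m)⁻¹ = Xmat m w := by
  rw [Hn_inv]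
  have := HX m w
  have h2 : Hn m * (Zmat m w * Hn m) = Hn m * (Hn m * Xmat m w) := by rw [this]
  calc Hn m * Zmat m w * Hn m = Hn m * (Zmat m w * Hn m) * (Hn m * Hn m) := by
        rw [HH, mul_one, mul_assoc]
    _ = Hn m * (Hn m * Xmat m w) * (Hn m * Hn m) := by rw [h2]
    _ = (Hn m * Hn m) * Xmat m w * (Hn m * Hn m) := by
        simp only [mul_assoc]
    _ = Xmat m w := by rw [HH, one_mul, mul_one]

lemma HZH' (m : ℕ) (w : St m) : Hn m * Zmat m w * Hn m = Xmat m w := by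
  have := HZH m w; rwa [Hn_inv] at this

/-- The transversal Hadamard as a unit. -/
noncomputable def HU (m : ℕ) : (Matrix (St m) (St m) ℂ)ˣ :=
  ⟨Hn m, Hn m, HH m, HH m⟩

lemma HU_inv (m : ℕ) : (HU m)⁻¹ = HU m := by
  ext
  rfl

lemma conj_mem_stab_s18 (m : ℕ) {g : (Matrix (St m) (St m) ℂ)ˣ} (hg : g ∈ stab m) :
    HU m * g * (HU m)⁻¹ ∈ stab m := by
  unfold stab at hg ⊢
  induction hg using Subgroup.closure_induction with
  | mem u hu =>
      obtain ⟨A, hA, hu⟩ := hu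
      apply Subgroup.subset_closure
      refine ⟨A, hA, ?_⟩
      have hval : ((HU m * u * (HU m)⁻¹ : (Matrix (St m) (St m) ℂ)ˣ) :
          Matrix (St m) (St m) ℂ) = Hn m * (u : Matrix (St m) (St m) ℂ) * Hn m := by
        rw [HU_inv]
        rfl
      rcases hu with h | h
      · right
        rw [hval, h, HXH']
      · left
        rw [hval, h, HZH']
  | one => simpa using one_mem _
  | mul x y _ _ hx hy =>
      have : HU m * (x * y) * (HU m)⁻¹ =
          (HU m * x * (HU m)⁻¹) * (HU m * y * (HU m)⁻¹) := by group
      rw [this]; exact mul_mem hx hy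
  | inv x _ hx =>
      have : HU m * x⁻¹ * (HU m)⁻¹ = (HU m * x * (HU m)⁻¹)⁻¹ := by group
      rw [this]; exact inv_mem hx

end Aux

/-- (i) Conjugation by the transversal Hadamard swaps `X(w)` and `Z(w)`;
(ii) it maps the stabilizer group of `QRM(m)` onto itself; and
(iii) it sends each logical `X̄(B) = X(v_B)` to `Z̄(Bᶜ) = Z(v_B)` and each
logical `Z̄(B) = Z(v_{Bᶜ})` to `X̄(Bᶜ) = X(v_{Bᶜ})`. -/
theorem stmt18 (m : ℕ) (hm : Even m) (h0 : 0 < m) :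
    (∀ w : St m,
      Hn m * Xmat m w * (Hn m)⁻¹ = Zmat m w ∧
      Hn m * Zmat m w * (Hn m)⁻¹ = Xmat m w) ∧
    (∀ g ∈ stab m,
      (∃ h ∈ stab m, (h : Matrix (St m) (St m) ℂ) =
        Hn m * (g : Matrix (St m) (St m) ℂ) * (Hn m)⁻¹) ∧
      (∃ h ∈ stab m, (h : Matrix (St m) (St m) ℂ) =
        (Hn m)⁻¹ * (g : Matrix (St m) (St m) ℂ) * Hn m)) ∧
    (∀ B : Finset (Fin m), B.card = m / 2 →
      Hn m * Xmat m (vA m B) * (Hn m)⁻¹ = Zmat m (vA m B) ∧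
      Hn m * Zmat m (vA m Bᶜ) * (Hn m)⁻¹ = Xmat m (vA m Bᶜ)) := by
  refine ⟨fun w => ⟨HXH m w, HZH m w⟩, fun g hg => ?_, fun B _ => ⟨HXH m _, HZH m _⟩⟩
  have hmem := conj_mem_stab_s18 m hg
  have hval : ((HU m * g * (HU m)⁻¹ : (Matrix (St m) (St m) ℂ)ˣ) :
      Matrix (St m) (St m) ℂ) = Hn m * (g : Matrix (St m) (St m) ℂ) * Hn m := by
    rw [HU_inv]; rfl
  constructor
  · exact ⟨HU m * g * (HU m)⁻¹, hmem, by rw [hval, Hn_inv]⟩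
  · exact ⟨HU m * g * (HU m)⁻¹, hmem, by rw [hval, Hn_inv]⟩
end
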